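/- Let H be a random variable with the shadowed-Rician density f_H (parameters b, Ω, m, α, β, δ). Then lim_{x→0⁺} P(H ≤ x)/x = α; i.e., the shadowed-Rician CDF is asymptotically linear with slope α at the origin. -/

import Mathlib

/-!
The density tends to `α` at `0⁺`: `e^{-βt} → 1`, and the series is `₁F₁(m; 1; δt)`, a power
series whose coefficients `(m)_n / n!²` are dominated by `(m + 1)^n / n!`, hence continuous at `0`
with value `1`. Once the density lies in `[α - ε, α + ε]` on `(0, x]`, integrating shows that
`P(H ≤ x) / x` lies there too.
-/

open MeasureTheory

/-- Rising factorial (Pochhammer symbol) with real base: `(a)_n = a (a+1) ⋯ (a+n-1)`. -/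
noncomputable def rf (a : ℝ) : ℕ → ℝ
  | 0 => 1
  | n + 1 => rf a n * (a + n)

/-- Shadowed-Rician density with parameters `α, β, δ` and positive integer `m`:
`f_H(x) = α e^{-βx} ∑_i (m)_i (δx)^i / (i!)²` for `x > 0`, and `0` otherwise. -/
noncomputable def srDensity (α β δ : ℝ) (m : ℕ) (x : ℝ) : ℝ :=
  if 0 < x then
    α * Real.exp (-β * x) * ∑' i : ℕ, rf (m : ℝ) i * (δ * x) ^ i / ((i.factorial : ℝ)) ^ 2
  else 0

open Filter Set Topology

lemma rf_nonneg {a : ℝ} (ha : 0 ≤ a) (n : ℕ) : 0 ≤ rf a n := by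
  induction n with
  | zero => simp [rf]
  | succ n ih => exact mul_nonneg ih (by positivity)

lemma rf_le_pow_mul_factorial {a : ℝ} (ha : 0 ≤ a) (n : ℕ) :
    rf a n ≤ (a + 1) ^ n * n.factorial := by
  induction n with
  | zero => simp [rf]
  | succ n ih =>
    calc rf a (n + 1) = rf a n * (a + n) := rfl
      _ ≤ ((a + 1) ^ n * n.factorial) * ((a + 1) * (n + 1)) :=
          mul_le_mul ih (by nlinarith [n.cast_nonneg (α := ℝ)]) (by positivity) (by positivity)
      _ = (a + 1) ^ (n + 1) * (n + 1).factorial := by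
          push_cast [Nat.factorial_succ]; ring

lemma summable_rf_div_factorial_sq {a : ℝ} (ha : 0 ≤ a) :
    Summable fun n : ℕ => rf a n / (n.factorial : ℝ) ^ 2 := by
  refine .of_nonneg_of_le (fun n => by have := rf_nonneg ha n; positivity) (fun n => ?_)
    (Real.summable_pow_div_factorial (a + 1))
  have hn : (0 : ℝ) < n.factorial := by exact_mod_cast n.factorial_pos
  rw [div_le_div_iff₀ (by positivity) hn]
  calc rf a n * n.factorial ≤ (a + 1) ^ n * n.factorial * n.factorial := by
        gcongr; exact rf_le_pow_mul_factorial ha n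
    _ = (a + 1) ^ n * (n.factorial : ℝ) ^ 2 := by ring

/-- Kummer's function `₁F₁(a; 1; u)`, using `(1)_n = n!`. -/
noncomputable def kummer1F1 (a u : ℝ) : ℝ :=
  ∑' n : ℕ, rf a n * u ^ n / (n.factorial : ℝ) ^ 2

lemma kummer1F1_zero (a : ℝ) : kummer1F1 a 0 = 1 := by
  rw [kummer1F1, tsum_eq_single 0 (fun n hn => by simp [hn])]
  simp [rf]

lemma continuousAt_kummer1F1_zero {a : ℝ} (ha : 0 ≤ a) : ContinuousAt (kummer1F1 a) 0 := by
  have hcont : ContinuousOn (kummer1F1 a) (Icc (-1) 1) := by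
    refine continuousOn_tsum (fun n => by fun_prop) (summable_rf_div_factorial_sq ha)
      (fun n u hu => ?_)
    have hu1 : |u| ≤ 1 := abs_le.2 hu
    rw [norm_div, norm_mul, norm_pow, Real.norm_eq_abs, Real.norm_eq_abs,
      abs_of_nonneg (rf_nonneg ha n), norm_pow, Real.norm_natCast]
    gcongr
    calc rf a n * |u| ^ n ≤ rf a n * 1 := by
          gcongr
          · exact rf_nonneg ha n
          · exact pow_le_one₀ (abs_nonneg u) hu1
      _ = rf a n := mul_one _
  exact hcont.continuousAt (Icc_mem_nhds (by norm_num) (by norm_num))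

lemma srDensity_of_nonpos (α β δ : ℝ) (m : ℕ) {t : ℝ} (ht : t ≤ 0) :
    srDensity α β δ m t = 0 :=
  if_neg (not_lt.2 ht)

lemma tendsto_srDensity_nhdsGT_zero (α β δ : ℝ) (m : ℕ) :
    Tendsto (srDensity α β δ m) (𝓝[>] 0) (𝓝 α) := by
  have hcont : ContinuousAt (fun t => α * Real.exp (-β * t) * kummer1F1 m (δ * t)) 0 := by
    have hk : ContinuousAt (fun t => kummer1F1 m (δ * t)) 0 := by
      refine ContinuousAt.comp (g := kummer1F1 m) ?_ (by fun_prop)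
      simpa using continuousAt_kummer1F1_zero (Nat.cast_nonneg m)
    fun_prop
  have hlim := hcont.tendsto.mono_left (nhdsWithin_le_nhds (s := Ioi 0))
  simp only [mul_zero, Real.exp_zero, mul_one, kummer1F1_zero] at hlim
  refine hlim.congr' (eventually_nhdsWithin_of_forall fun t (ht : 0 < t) => ?_)
  simp only [srDensity, if_pos ht, kummer1F1]

section CDF

variable {f : ℝ → ℝ} {x : ℝ}

lemma ofReal_mul_le_setLIntegral_Iic {a : ℝ} (ha : ∀ t ∈ Ioc 0 x, a ≤ f t) :
    ENNReal.ofReal a * ENNReal.ofReal x ≤ ∫⁻ t in Iic x, ENNReal.ofReal (f t) :=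
  calc ENNReal.ofReal a * ENNReal.ofReal x = ∫⁻ _ in Ioc 0 x, ENNReal.ofReal a := by
        rw [setLIntegral_const, Real.volume_Ioc, sub_zero]
    _ ≤ ∫⁻ t in Ioc 0 x, ENNReal.ofReal (f t) :=
        setLIntegral_mono' measurableSet_Ioc fun t ht => ENNReal.ofReal_le_ofReal (ha t ht)
    _ ≤ ∫⁻ t in Iic x, ENNReal.ofReal (f t) := lintegral_mono_set Ioc_subset_Iic_self

lemma setLIntegral_Iic_le_ofReal_mul {b : ℝ} (hf : ∀ t ≤ 0, f t = 0)
    (hb : ∀ t ∈ Ioc 0 x, f t ≤ b) :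
    ∫⁻ t in Iic x, ENNReal.ofReal (f t) ≤ ENNReal.ofReal b * ENNReal.ofReal x :=
  calc ∫⁻ t in Iic x, ENNReal.ofReal (f t)
        ≤ ∫⁻ t in Iic x, (Ioc 0 x).indicator (fun _ => ENNReal.ofReal b) t := by
        refine setLIntegral_mono' measurableSet_Iic fun t ht => ?_
        rcases le_or_gt t 0 with ht0 | ht0
        · simp [hf t ht0]
        · rw [indicator_of_mem (show t ∈ Ioc 0 x from ⟨ht0, ht⟩)]
          exact ENNReal.ofReal_le_ofReal (hb t ⟨ht0, ht⟩)
    _ = ENNReal.ofReal b * ENNReal.ofReal x := by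
        rw [setLIntegral_indicator measurableSet_Ioc, inter_eq_left.2 Ioc_subset_Iic_self,
          setLIntegral_const, Real.volume_Ioc, sub_zero]

lemma toReal_setLIntegral_Iic_div_mem_Icc {a b : ℝ} (hf : ∀ t ≤ 0, f t = 0) (hx : 0 < x)
    (hb0 : 0 ≤ b) (hab : ∀ t ∈ Ioc 0 x, f t ∈ Icc a b) :
    (∫⁻ t in Iic x, ENNReal.ofReal (f t)).toReal / x ∈ Icc a b := by
  have hlow := ofReal_mul_le_setLIntegral_Iic fun t ht => (hab t ht).1
  have hup := setLIntegral_Iic_le_ofReal_mul hf fun t ht => (hab t ht).2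
  have hfin : ENNReal.ofReal b * ENNReal.ofReal x ≠ ⊤ := by finiteness
  rw [mem_Icc, le_div_iff₀ hx, div_le_iff₀ hx]
  constructor
  · calc a * x ≤ max a 0 * x := by gcongr; exact le_max_left a 0
      _ = (ENNReal.ofReal a * ENNReal.ofReal x).toReal := by
          rw [ENNReal.toReal_mul, ENNReal.toReal_ofReal', ENNReal.toReal_ofReal hx.le]
      _ ≤ _ := ENNReal.toReal_mono (ne_top_of_le_ne_top hfin hup) hlow
  · calc _ ≤ (ENNReal.ofReal b * ENNReal.ofReal x).toReal := ENNReal.toReal_mono hfin hup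
      _ = b * x := by rw [ENNReal.toReal_mul, ENNReal.toReal_ofReal hb0, ENNReal.toReal_ofReal hx.le]

lemma tendsto_toReal_setLIntegral_Iic_div {L : ℝ} (hf : ∀ t ≤ 0, f t = 0) (hL0 : 0 ≤ L)
    (hL : Tendsto f (𝓝[>] 0) (𝓝 L)) :
    Tendsto (fun x => (∫⁻ t in Iic x, ENNReal.ofReal (f t)).toReal / x) (𝓝[>] 0) (𝓝 L) := by
  refine (nhds_basis_Icc_pos L).tendsto_right_iff.2 fun ε hε => ?_
  obtain ⟨u, hu, hsub⟩ :=
    mem_nhdsGT_iff_exists_Ioo_subset.1 ((nhds_basis_Icc_pos L).tendsto_right_iff.1 hL ε hε)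
  filter_upwards [Ioo_mem_nhdsGT hu] with x hx
  exact toReal_setLIntegral_Iic_div_mem_Icc hf hx.1 (by linarith)
    fun t ht => hsub ⟨ht.1, ht.2.trans_lt hx.2⟩

end CDF

theorem stmt_11_general {Ωs : Type*} [MeasurableSpace Ωs] (μ : Measure Ωs)
    (b Ωp α β δ : ℝ) (m : ℕ)
    (hb : 0 < b) (hΩ : 0 < Ωp)
    (hα : α = 1 / (2 * b) * ((2 * b * m) / (2 * b * m + Ωp)) ^ m)
    (H : Ωs → ℝ) (hHm : Measurable H)
    (hH : Measure.map H μ = volume.withDensity fun t => ENNReal.ofReal (srDensity α β δ m t)) :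
    Filter.Tendsto (fun x : ℝ => (μ {ω | H ω ≤ x}).toReal / x)
      (nhdsWithin 0 (Set.Ioi 0)) (nhds α) := by
  have hcdf (x : ℝ) :
      μ {ω | H ω ≤ x} = ∫⁻ t in Iic x, ENNReal.ofReal (srDensity α β δ m t) := by
    rw [show {ω | H ω ≤ x} = H ⁻¹' Iic x from rfl, ← Measure.map_apply hHm measurableSet_Iic, hH,
      withDensity_apply _ measurableSet_Iic]
  simp_rw [hcdf]
  exact tendsto_toReal_setLIntegral_Iic_div (fun t => srDensity_of_nonpos α β δ m)
    (by rw [hα]; positivity) (tendsto_srDensity_nhdsGT_zero α β δ m)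

/-- If `H` has the shadowed-Rician density, then `lim_{x→0⁺} P(H ≤ x)/x = α`: the
shadowed-Rician CDF is asymptotically linear with slope `α` at the origin. -/
theorem stmt_11 {Ωs : Type*} [MeasurableSpace Ωs] (μ : Measure Ωs) [IsProbabilityMeasure μ]
    (b Ωp α β δ : ℝ) (m : ℕ)
    (hb : 0 < b) (hΩ : 0 < Ωp) (hm : 0 < m)
    (hα : α = 1 / (2 * b) * ((2 * b * m) / (2 * b * m + Ωp)) ^ m)
    (hβ : β = 1 / (2 * b))
    (hδ : δ = Ωp / (2 * b * (2 * b * m + Ωp)))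
    (H : Ωs → ℝ) (hHm : Measurable H)
    (hH : Measure.map H μ = volume.withDensity fun t => ENNReal.ofReal (srDensity α β δ m t)) :
    Filter.Tendsto (fun x : ℝ => (μ {ω | H ω ≤ x}).toReal / x)
      (nhdsWithin 0 (Set.Ioi 0)) (nhds α) :=
  stmt_11_general μ b Ωp α β δ m hb hΩ hα H hHm hH
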